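/- Let A and B be lattices with least elements. The map ⊠ : A × B → A ⊠ B, ⟨a,b⟩ ↦ a ⊠ b, is a universal {0}-lattice bimorphism: for every lattice C with least element and every {0}-lattice bimorphism f : A × B → C, there exists a unique {∨,0}-homomorphism g : A ⊠ B → C such that g(a ⊠ b) = f(⟨a,b⟩) for all a ∈ A and b ∈ B. -/

import Mathlib

/-- The pure box `a □ b = {⟨x,y⟩ : x ≤ a or y ≤ b}`. -/
def pureBox {A B : Type*} [Lattice A] [Lattice B] (a : A) (b : B) : Set (A × B) :=
  {p : A × B | p.1 ≤ a ∨ p.2 ≤ b}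

/-- `a ∘ b = {⟨x,y⟩ : x ≤ a and y ≤ b}`. -/
def pureCirc {A B : Type*} [Lattice A] [Lattice B] (a : A) (b : B) : Set (A × B) :=
  {p : A × B | p.1 ≤ a ∧ p.2 ≤ b}

/-- The box product `A □ B`: all finite (nonempty) intersections of pure boxes. -/
def BoxProd (A B : Type*) [Lattice A] [Lattice B] : Set (Set (A × B)) :=
  {H | ∃ (n : ℕ) (a : Fin (n + 1) → A) (b : Fin (n + 1) → B),
    H = ⋂ i, pureBox (a i) (b i)}

/-- `A ⊡ B`: all finite unions of pure boxes (at least one) and pure circles. -/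
def BoxDot (A B : Type*) [Lattice A] [Lattice B] : Set (Set (A × B)) :=
  {H | ∃ (m n : ℕ) (a : Fin (m + 1) → A) (b : Fin (m + 1) → B)
      (c : Fin n → A) (d : Fin n → B),
    H = (⋃ i, pureBox (a i) (b i)) ∪ ⋃ j, pureCirc (c j) (d j)}

/-- The box closure of a subset of `A × B`: intersection of all pure boxes containing it. -/
def BoxCl {A B : Type*} [Lattice A] [Lattice B] (X : Set (A × B)) : Set (A × B) :=
  ⋂ (a : A) (b : B) (_ : X ⊆ pureBox a b), pureBox a b

/-- The pure lattice tensor `a ⊠ b = (a ∘ b) ∪ ⊥_{A,B}`, where `⊥_{A,B}` consists of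
the pairs one of whose coordinates is a least element. -/
def pureTens {A B : Type*} [Lattice A] [Lattice B] (a : A) (b : B) : Set (A × B) :=
  pureCirc a b ∪ {p : A × B | IsBot p.1 ∨ IsBot p.2}

/-- A subset of `A × B` is confined if it is contained in some pure lattice tensor. -/
def Confined {A B : Type*} [Lattice A] [Lattice B] (X : Set (A × B)) : Prop :=
  ∃ (a : A) (b : B), X ⊆ pureTens a b

/-- The lattice tensor product `A ⊠ B`: all confined elements of `A □ B`. -/
def LatTens (A B : Type*) [Lattice A] [Lattice B] : Set (Set (A × B)) :=
  {H | H ∈ BoxProd A B ∧ Confined H}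

/-- `X^△ = {⟨a,b⟩ : ⟨x,y⟩ ◁ ⟨a,b⟩ for all ⟨x,y⟩ ∈ X}` where `⟨x,y⟩ ◁ ⟨a,b⟩` iff
`x ≤ a` or `y ≤ b`. -/
def trUp {A B : Type*} [Lattice A] [Lattice B] (X : Set (A × B)) : Set (A × B) :=
  {p : A × B | ∀ q ∈ X, q.1 ≤ p.1 ∨ q.2 ≤ p.2}

/-- `X^▽ = {⟨a,b⟩ : ⟨a,b⟩ ◁ ⟨x,y⟩ for all ⟨x,y⟩ ∈ X}`. -/
def trDown {A B : Type*} [Lattice A] [Lattice B] (X : Set (A × B)) : Set (A × B) :=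
  {p : A × B | ∀ q ∈ X, p.1 ≤ q.1 ∨ p.2 ≤ q.2}

/-- `F_D(n)`: the upper subsets `𝔠` of the powerset of `n` with `∅ ∉ 𝔠` and `n ∈ 𝔠`. -/
def FD (n : ℕ) : Set (Finset (Finset (Fin n))) :=
  {c | (∀ X ∈ c, ∀ Y : Finset (Fin n), X ⊆ Y → Y ∈ c) ∧ ∅ ∉ c ∧ Finset.univ ∈ c}

/-- `𝔠* = {X ⊆ n : n − X ∉ 𝔠}`. -/
def cstar {n : ℕ} (c : Finset (Finset (Fin n))) : Finset (Finset (Fin n)) :=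
  Finset.univ.filter fun X => Xᶜ ∉ c

/-- The lattice polynomial `P_𝔠(x) = ⋀_{X ∈ 𝔠} ⋁_{i ∈ X} x_i` (with value `⊥` in the
irrelevant case `𝔠 = ∅`). -/
def Pc {L : Type*} [Lattice L] [OrderBot L] {n : ℕ}
    (c : Finset (Finset (Fin n))) (x : Fin n → L) : L :=
  if h : c.Nonempty then c.inf' h fun X => X.sup x else ⊥

/-- A `{0}`-lattice bimorphism from `A × B` to `C`. -/
def IsZeroLatBimorphism {A B C : Type*} [Lattice A] [OrderBot A] [Lattice B] [OrderBot B]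
    [Lattice C] [OrderBot C] (f : A × B → C) : Prop :=
  (∀ a : A, f (a, ⊥) = ⊥) ∧ (∀ b : B, f (⊥, b) = ⊥) ∧
  (∀ (a₀ a₁ : A) (b : B), f (a₀ ⊔ a₁, b) = f (a₀, b) ⊔ f (a₁, b)) ∧
  (∀ (a : A) (b₀ b₁ : B), f (a, b₀ ⊔ b₁) = f (a, b₀) ⊔ f (a, b₁)) ∧
  ∀ (n : ℕ) (a : Fin (n + 1) → A) (b : Fin (n + 1) → B), ∀ c ∈ FD (n + 1),
    f (Pc c a, Pc (cstar c) b) ≤ Finset.univ.sup fun i => f (a i, b i)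

/-!
Every confined finite intersection of pure boxes is a finite union of pure tensors
`⋃_{q ∈ s} q.1 ⊠ q.2`: intersect `a₀ ⊠ b₀` with the boxes one at a time, using
`(a ⊠ b) ∩ (u □ v) = ((a ∧ u) ⊠ b) ∪ (a ⊠ (b ∧ v))`. Conversely, the box closure of such a
union is again in `A ⊠ B`. Hence a `{∨,0}`-homomorphism extending `f` must send
`BoxCl (⋃_{q ∈ s} q.1 ⊠ q.2)` to `⋁_{q ∈ s} f q`, which gives uniqueness by induction on `s`.
This assignment is well defined because `f p ≤ ⋁_{q ∈ s} f q` for every `p` in that box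
closure: if `p = ⟨x, y⟩` has nonzero coordinates, enumerate `s` as `⟨a_i, b_i⟩` and
take `𝔠 = {X : x ≤ ⋁_{i ∈ X} a_i}`;
membership in the box closure says exactly that `y ≤ P_{𝔠*}(b)`, so condition (iv) applies.
-/

open Set

section BoxGeometry

variable {A B : Type*} [Lattice A] [Lattice B]

lemma pureTens_subset_pureBox_iff {a u : A} {b v : B} :
    pureTens a b ⊆ pureBox u v ↔ a ≤ u ∨ b ≤ v := by
  refine ⟨fun h => h (show (a, b) ∈ pureTens a b from Or.inl ⟨le_rfl, le_rfl⟩), ?_⟩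
  rintro hab ⟨x, y⟩ (⟨hx, hy⟩ | hx | hy)
  · exact hab.imp hx.trans hy.trans
  · exact Or.inl (hx u)
  · exact Or.inr (hy v)

lemma pureTens_inter_pureBox (a u : A) (b v : B) :
    pureTens a b ∩ pureBox u v = pureTens (a ⊓ u) b ∪ pureTens a (b ⊓ v) := by
  ext ⟨x, y⟩
  simp only [pureTens, pureCirc, pureBox, mem_union, mem_inter_iff, mem_ofPred_eq, le_inf_iff]
  constructor
  · rintro ⟨⟨hx, hy⟩ | hbot, hu | hv⟩
    · exact Or.inl (Or.inl ⟨⟨hx, hu⟩, hy⟩)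
    · exact Or.inr (Or.inl ⟨hx, hy, hv⟩)
    all_goals exact Or.inl (Or.inr hbot)
  · rintro ((⟨⟨hx, hu⟩, hy⟩ | hbot) | (⟨hx, hy, hv⟩ | hbot))
    · exact ⟨Or.inl ⟨hx, hy⟩, Or.inl hu⟩
    · exact ⟨Or.inr hbot, hbot.imp (· u) (· v)⟩
    · exact ⟨Or.inl ⟨hx, hy⟩, Or.inr hv⟩
    · exact ⟨Or.inr hbot, hbot.imp (· u) (· v)⟩

lemma pureTens_mono {a a' : A} {b b' : B} (ha : a ≤ a') (hb : b ≤ b') :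
    pureTens a b ⊆ pureTens a' b' := by
  rintro p (⟨h1, h2⟩ | h)
  exacts [Or.inl ⟨h1.trans ha, h2.trans hb⟩, Or.inr h]

lemma exists_surjective_fin_succ (ι : Type*) [Fintype ι] [Nonempty ι] :
    ∃ (n : ℕ) (e : Fin (n + 1) → ι), Function.Surjective e := by
  obtain ⟨n, hn⟩ := Nat.exists_eq_succ_of_ne_zero (Fintype.card_ne_zero (α := ι))
  exact ⟨n, _, ((finCongr hn.symm).trans (Fintype.equivFin ι).symm).surjective⟩

lemma iInter_pureBox_mem_boxProd {ι : Type*} [Fintype ι] [Nonempty ι] (a : ι → A) (b : ι → B) :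
    ⋂ i, pureBox (a i) (b i) ∈ BoxProd A B := by
  obtain ⟨n, e, he⟩ := exists_surjective_fin_succ ι
  exact ⟨n, a ∘ e, b ∘ e, (he.iInter_comp fun i => pureBox (a i) (b i)).symm⟩

lemma subset_boxCl (X : Set (A × B)) : X ⊆ BoxCl X := by
  intro p hp
  simp only [BoxCl, mem_iInter]
  exact fun u v hX => hX hp

lemma boxCl_subset_pureBox_iff {X : Set (A × B)} {a : A} {b : B} :
    BoxCl X ⊆ pureBox a b ↔ X ⊆ pureBox a b := by
  refine ⟨fun h => (subset_boxCl X).trans h, fun h p hp => ?_⟩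
  simp only [BoxCl, mem_iInter] at hp
  exact hp a b h

lemma boxCl_congr {X Y : Set (A × B)} (h : ∀ a b, X ⊆ pureBox a b ↔ Y ⊆ pureBox a b) :
    BoxCl X = BoxCl Y := by
  ext p
  simp only [BoxCl, mem_iInter]
  exact forall₂_congr fun a b => by rw [h a b]

lemma boxCl_union_boxCl (X Y : Set (A × B)) :
    BoxCl (BoxCl X ∪ BoxCl Y) = BoxCl (X ∪ Y) :=
  boxCl_congr fun a b => by simp only [union_subset_iff, boxCl_subset_pureBox_iff]

lemma boxCl_eq_self {H : Set (A × B)} (hH : H ∈ BoxProd A B) : BoxCl H = H := by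
  obtain ⟨n, a, b, rfl⟩ := hH
  refine (subset_iInter fun i => ?_).antisymm (subset_boxCl _)
  exact boxCl_subset_pureBox_iff.2 (iInter_subset _ i)

variable [OrderBot A] [OrderBot B]

lemma pureTens_eq_pureBox_inter_pureBox (a : A) (b : B) :
    pureTens a b = pureBox a ⊥ ∩ pureBox ⊥ b := by
  ext ⟨x, y⟩
  simp only [pureTens, pureCirc, pureBox, mem_union, mem_ofPred_eq, mem_inter_iff,
    isBot_iff_eq_bot, le_bot_iff]
  constructor
  · rintro (⟨hx, hy⟩ | rfl | rfl)
    · exact ⟨Or.inl hx, Or.inr hy⟩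
    · exact ⟨Or.inl bot_le, Or.inl rfl⟩
    · exact ⟨Or.inr rfl, Or.inr bot_le⟩
  · rintro ⟨hx | rfl, rfl | hy⟩
    · exact Or.inr (Or.inl rfl)
    · exact Or.inl ⟨hx, hy⟩
    all_goals exact Or.inr (Or.inr rfl)

lemma pureTens_mem_latTens (a : A) (b : B) : pureTens a b ∈ LatTens A B := by
  refine ⟨?_, a, b, subset_rfl⟩
  convert iInter_pureBox_mem_boxProd ![a, ⊥] ![⊥, b] using 1
  ext p
  simp [pureTens_eq_pureBox_inter_pureBox, Fin.forall_fin_two]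

lemma boxCl_subset_pureTens {X : Set (A × B)} {a : A} {b : B} (h : X ⊆ pureTens a b) :
    BoxCl X ⊆ pureTens a b := by
  rw [pureTens_eq_pureBox_inter_pureBox, subset_inter_iff] at h ⊢
  exact h.imp boxCl_subset_pureBox_iff.2 boxCl_subset_pureBox_iff.2

end BoxGeometry

section PureTensUnion

variable {A B : Type*} [Lattice A] [Lattice B]

def pureTensUnion (s : Finset (A × B)) : Set (A × B) :=
  ⋃ q ∈ s, pureTens q.1 q.2

lemma subset_pureTensUnion {s : Finset (A × B)} {q : A × B} (hq : q ∈ s) :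
    pureTens q.1 q.2 ⊆ pureTensUnion s :=
  subset_biUnion_of_mem (u := fun q : A × B => pureTens q.1 q.2) hq

lemma pureTensUnion_union [DecidableEq (A × B)] (s t : Finset (A × B)) :
    pureTensUnion (s ∪ t) = pureTensUnion s ∪ pureTensUnion t :=
  Finset.set_biUnion_union s t _

lemma pureTensUnion_subset_pureBox_iff {s : Finset (A × B)} {u : A} {v : B} :
    pureTensUnion s ⊆ pureBox u v ↔ ∀ q ∈ s, q.1 ≤ u ∨ q.2 ≤ v := by
  simp only [pureTensUnion, iUnion₂_subset_iff, pureTens_subset_pureBox_iff]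

lemma mem_boxCl_pureTensUnion {s : Finset (A × B)} {p : A × B} :
    p ∈ BoxCl (pureTensUnion s) ↔
      ∀ u v, (∀ q ∈ s, q.1 ≤ u ∨ q.2 ≤ v) → p.1 ≤ u ∨ p.2 ≤ v := by
  simp only [BoxCl, mem_iInter, pureTensUnion_subset_pureBox_iff]
  rfl

lemma exists_pureTensUnion_eq_inter_pureBox (s : Finset (A × B)) (u : A) (v : B) :
    ∃ t, pureTensUnion s ∩ pureBox u v = pureTensUnion t := by
  classical
  refine ⟨s.image (fun q => (q.1 ⊓ u, q.2)) ∪ s.image (fun q => (q.1, q.2 ⊓ v)), ?_⟩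
  simp only [pureTensUnion, Finset.set_biUnion_union, Finset.set_biUnion_finset_image,
    iUnion₂_inter, pureTens_inter_pureBox, iUnion_union_distrib]

lemma exists_pureTensUnion_eq_of_mem_latTens {H : Set (A × B)} (hH : H ∈ LatTens A B) :
    ∃ s, H = pureTensUnion s := by
  classical
  obtain ⟨⟨n, a, b, rfl⟩, a₀, b₀, hconf⟩ := hH
  have key : ∀ t : Finset (Fin (n + 1)),
      ∃ s, pureTens a₀ b₀ ∩ ⋂ i ∈ t, pureBox (a i) (b i) = pureTensUnion s := by
    intro t
    induction t using Finset.induction_on with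
    | empty => exact ⟨{(a₀, b₀)}, by simp [pureTensUnion]⟩
    | insert i t _ ih =>
      obtain ⟨s, hs⟩ := ih
      obtain ⟨s', hs'⟩ := exists_pureTensUnion_eq_inter_pureBox s (a i) (b i)
      refine ⟨s', ?_⟩
      rw [Finset.set_biInter_insert, ← hs', ← hs, inter_left_comm, inter_comm]
  obtain ⟨s, hs⟩ := key Finset.univ
  refine ⟨s, ?_⟩
  simpa only [Finset.mem_univ, iInter_true, inter_eq_right.2 hconf] using hs

lemma exists_eq_boxCl_pureTensUnion {H : Set (A × B)} (hH : H ∈ LatTens A B) :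
    ∃ s, H = BoxCl (pureTensUnion s) := by
  obtain ⟨s, rfl⟩ := exists_pureTensUnion_eq_of_mem_latTens hH
  exact ⟨s, (boxCl_eq_self hH.1).symm⟩

variable [OrderBot A] [OrderBot B]

lemma boxCl_pureTensUnion_mem_latTens (s : Finset (A × B)) :
    BoxCl (pureTensUnion s) ∈ LatTens A B := by
  classical
  have hbox : BoxCl (pureTensUnion s) =
      ⋂ X : s.powerset, pureBox (X.1.sup Prod.fst) ((s \ X.1).sup Prod.snd) := by
    refine (subset_iInter fun X => boxCl_subset_pureBox_iff.2
      (pureTensUnion_subset_pureBox_iff.2 fun q hq => ?_)).antisymm fun p hp => ?_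
    · by_cases hqX : q ∈ X.1
      · exact Or.inl (Finset.le_sup (f := Prod.fst) hqX)
      · exact Or.inr (Finset.le_sup (f := Prod.snd) (Finset.mem_sdiff.2 ⟨hq, hqX⟩))
    · refine mem_boxCl_pureTensUnion.2 fun u v huv => ?_
      refine (mem_iInter.1 hp ⟨s.filter (·.1 ≤ u), Finset.mem_powerset.2
        (Finset.filter_subset _ _)⟩).imp (fun h => h.trans (Finset.sup_le fun q hq => ?_))
        (fun h => h.trans (Finset.sup_le fun q hq => ?_))
      · exact (Finset.mem_filter.1 hq).2
      · simp only [Finset.mem_sdiff, Finset.mem_filter, not_and] at hq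
        exact (huv q hq.1).resolve_left (hq.2 hq.1)
  have : Nonempty s.powerset := ⟨⟨∅, Finset.empty_mem_powerset s⟩⟩
  refine ⟨hbox ▸ iInter_pureBox_mem_boxProd _ _, s.sup Prod.fst, s.sup Prod.snd,
    boxCl_subset_pureTens (iUnion₂_subset fun q hq => pureTens_mono ?_ ?_)⟩
  exacts [Finset.le_sup (f := Prod.fst) hq, Finset.le_sup (f := Prod.snd) hq]

lemma boxCl_pureTensUnion_empty : BoxCl (pureTensUnion (∅ : Finset (A × B))) = pureTens ⊥ ⊥ := by
  rw [← boxCl_eq_self (pureTens_mem_latTens (⊥ : A) (⊥ : B)).1]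
  exact boxCl_congr fun u v => by
    simp [pureTensUnion_subset_pureBox_iff, pureTens_subset_pureBox_iff]

lemma boxCl_pureTensUnion_singleton (a : A) (b : B) :
    BoxCl (pureTensUnion {(a, b)}) = pureTens a b := by
  rw [pureTensUnion, Finset.set_biUnion_singleton, boxCl_eq_self (pureTens_mem_latTens a b).1]

end PureTensUnion

lemma le_Pc {L : Type*} [Lattice L] [OrderBot L] {n : ℕ} {c : Finset (Finset (Fin n))}
    {x : Fin n → L} {z : L} (hc : c.Nonempty) (h : ∀ X ∈ c, z ≤ X.sup x) : z ≤ Pc c x := by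
  rw [Pc, dif_pos hc]
  exact Finset.le_inf' _ _ h

namespace IsZeroLatBimorphism

variable {A B C : Type*} [Lattice A] [OrderBot A] [Lattice B] [OrderBot B]
  [Lattice C] [OrderBot C] {f : A × B → C}

lemma monotone (hf : IsZeroLatBimorphism f) : Monotone f := by
  rintro ⟨a, b⟩ ⟨a', b'⟩ ⟨ha, hb⟩
  calc f (a, b) ≤ f (a, b) ⊔ f (a, b') := le_sup_left
    _ = f (a, b') := by rw [← hf.2.2.2.1, sup_eq_right.2 hb]
    _ ≤ f (a, b') ⊔ f (a', b') := le_sup_left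
    _ = f (a', b') := by rw [← hf.2.2.1, sup_eq_right.2 ha]

lemma apply_eq_bot (hf : IsZeroLatBimorphism f) {p : A × B} (hp : IsBot p.1 ∨ IsBot p.2) :
    f p = ⊥ := by
  obtain ⟨x, y⟩ := p
  rcases hp with hx | hy
  · rw [show x = ⊥ from isBot_iff_eq_bot.1 hx, hf.2.1]
  · rw [show y = ⊥ from isBot_iff_eq_bot.1 hy, hf.1]

lemma apply_le_sup (hf : IsZeroLatBimorphism f) {n : ℕ} (a : Fin (n + 1) → A)
    (b : Fin (n + 1) → B) {x : A} {y : B} (hx : x ≠ ⊥) (hy : y ≠ ⊥)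
    (h : ∀ u v, (∀ i, a i ≤ u ∨ b i ≤ v) → x ≤ u ∨ y ≤ v) :
    f (x, y) ≤ Finset.univ.sup fun i => f (a i, b i) := by
  classical
  set c := Finset.univ.filter fun X : Finset (Fin (n + 1)) => x ≤ X.sup a
  have hc : ∀ X, X ∈ c ↔ x ≤ X.sup a := by simp [c]
  have hcut : ∀ X : Finset (Fin (n + 1)), x ≤ Xᶜ.sup a ∨ y ≤ X.sup b := fun X =>
    h _ _ fun i => by
      by_cases hi : i ∈ X
      exacts [Or.inr (Finset.le_sup hi), Or.inl (Finset.le_sup (Finset.mem_compl.2 hi))]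
  have hcFD : c ∈ FD (n + 1) := by
    refine ⟨fun X hX Y hXY => ?_, fun h₀ => hx (le_bot_iff.1 ((hc ∅).1 h₀)), ?_⟩
    · exact (hc Y).2 (((hc X).1 hX).trans (Finset.sup_mono hXY))
    · refine (hc _).2 ((hcut ∅).resolve_right fun hy' => hy (le_bot_iff.1 hy'))
  have hxP : x ≤ Pc c a := le_Pc ⟨_, hcFD.2.2⟩ fun X hX => (hc X).1 hX
  have hyP : y ≤ Pc (cstar c) b := by
    refine le_Pc ⟨Finset.univ, ?_⟩ fun X hX => (hcut X).resolve_left fun hX' => ?_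
    · simpa [cstar] using hcFD.2.1
    · exact (Finset.mem_filter.1 hX).2 ((hc _).2 hX')
  exact (hf.monotone (show (x, y) ≤ (Pc c a, Pc (cstar c) b) from ⟨hxP, hyP⟩)).trans
    (hf.2.2.2.2 n a b c hcFD)

lemma apply_le_sup_of_mem_boxCl (hf : IsZeroLatBimorphism f) {s : Finset (A × B)}
    {p : A × B} (hp : p ∈ BoxCl (pureTensUnion s)) : f p ≤ s.sup f := by
  by_cases hbot : IsBot p.1 ∨ IsBot p.2
  · exact (hf.apply_eq_bot hbot).trans_le bot_le
  simp only [not_or, isBot_iff_eq_bot] at hbot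
  rw [mem_boxCl_pureTensUnion] at hp
  have hs : s.Nonempty := by
    refine Finset.nonempty_iff_ne_empty.2 ?_
    rintro rfl
    exact (hp ⊥ ⊥ fun _ hq => absurd hq (Finset.notMem_empty _)).elim
      (fun h => hbot.1 (le_bot_iff.1 h)) (fun h => hbot.2 (le_bot_iff.1 h))
  have := hs.to_subtype
  obtain ⟨n, e, he⟩ := exists_surjective_fin_succ s
  calc f p ≤ Finset.univ.sup fun i => f ((e i).1.1, (e i).1.2) :=
        hf.apply_le_sup _ _ hbot.1 hbot.2 fun u v huv => hp u v fun q hq => by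
          obtain ⟨i, hi⟩ := he ⟨q, hq⟩
          simpa only [hi] using huv i
    _ ≤ s.sup f := Finset.sup_le fun i _ => Finset.le_sup (e i).2

lemma sup_le_sup_of_subset_boxCl (hf : IsZeroLatBimorphism f) {s t : Finset (A × B)}
    (h : pureTensUnion s ⊆ BoxCl (pureTensUnion t)) : s.sup f ≤ t.sup f :=
  Finset.sup_le fun _ hq => hf.apply_le_sup_of_mem_boxCl
    (h (subset_pureTensUnion hq (Or.inl ⟨le_rfl, le_rfl⟩)))

end IsZeroLatBimorphism

section TensorLift

variable {A B C : Type*} [Lattice A] [OrderBot A] [Lattice B] [OrderBot B]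

open Classical in
noncomputable def tensorLift [SemilatticeSup C] [OrderBot C] (f : A × B → C)
    (H : Set (A × B)) : C :=
  if h : ∃ s : Finset (A × B), H = BoxCl (pureTensUnion s) then h.choose.sup f else ⊥

lemma tensorLift_boxCl_pureTensUnion [Lattice C] [OrderBot C] {f : A × B → C}
    (hf : IsZeroLatBimorphism f) (s : Finset (A × B)) :
    tensorLift f (BoxCl (pureTensUnion s)) = s.sup f := by
  have h : ∃ t, BoxCl (pureTensUnion s) = BoxCl (pureTensUnion t) := ⟨s, rfl⟩
  have ht := h.choose_spec
  rw [tensorLift, dif_pos h]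
  exact le_antisymm (hf.sup_le_sup_of_subset_boxCl ((subset_boxCl _).trans ht.ge))
    (hf.sup_le_sup_of_subset_boxCl ((subset_boxCl _).trans ht.le))

lemma map_boxCl_pureTensUnion_eq_sup [SemilatticeSup C] [OrderBot C] {f : A × B → C}
    {g : Set (A × B) → C}
    (hjoin : ∀ H ∈ LatTens A B, ∀ K ∈ LatTens A B, g (BoxCl (H ∪ K)) = g H ⊔ g K)
    (hzero : g (pureTens (⊥ : A) (⊥ : B)) = ⊥) (hpure : ∀ a b, g (pureTens a b) = f (a, b))
    (s : Finset (A × B)) : g (BoxCl (pureTensUnion s)) = s.sup f := by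
  classical
  induction s using Finset.induction_on with
  | empty => rw [boxCl_pureTensUnion_empty, hzero, Finset.sup_empty]
  | insert q s _ ih =>
    obtain ⟨a, b⟩ := q
    rw [Finset.insert_eq, pureTensUnion_union, ← boxCl_union_boxCl,
      boxCl_pureTensUnion_singleton, hjoin _ (pureTens_mem_latTens a b) _
        (boxCl_pureTensUnion_mem_latTens s), hpure, ih, Finset.sup_union, Finset.sup_singleton]

end TensorLift

/-- `⊠ : A × B → A ⊠ B` is a universal `{0}`-lattice bimorphism: every
`{0}`-lattice bimorphism `f : A × B → C` factors uniquely through a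
`{∨,0}`-homomorphism `g : A ⊠ B → C` (the join of `H, K ∈ A ⊠ B` being
`BoxCl (H ∪ K)` and its zero being `⊥ ⊠ ⊥`). -/
theorem stmt_15 {A B C : Type*} [Lattice A] [OrderBot A] [Lattice B] [OrderBot B]
    [Lattice C] [OrderBot C] (f : A × B → C) (hf : IsZeroLatBimorphism f) :
    ∃ g : Set (A × B) → C,
      (∀ H ∈ LatTens A B, ∀ K ∈ LatTens A B, g (BoxCl (H ∪ K)) = g H ⊔ g K) ∧
      g (pureTens (⊥ : A) (⊥ : B)) = ⊥ ∧
      (∀ (a : A) (b : B), g (pureTens a b) = f (a, b)) ∧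
      ∀ g' : Set (A × B) → C,
        (∀ H ∈ LatTens A B, ∀ K ∈ LatTens A B, g' (BoxCl (H ∪ K)) = g' H ⊔ g' K) →
        g' (pureTens (⊥ : A) (⊥ : B)) = ⊥ →
        (∀ (a : A) (b : B), g' (pureTens a b) = f (a, b)) →
        ∀ H ∈ LatTens A B, g H = g' H := by
  classical
  have hlift := tensorLift_boxCl_pureTensUnion hf
  have hpure : ∀ a b, tensorLift f (pureTens a b) = f (a, b) := fun a b => by
    rw [← boxCl_pureTensUnion_singleton, hlift, Finset.sup_singleton]
  refine ⟨tensorLift f, fun H hH K hK => ?_, (hpure ⊥ ⊥).trans (hf.1 ⊥), hpure,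
    fun g' hjoin hzero hpure' H hH => ?_⟩
  · obtain ⟨s, rfl⟩ := exists_eq_boxCl_pureTensUnion hH
    obtain ⟨t, rfl⟩ := exists_eq_boxCl_pureTensUnion hK
    rw [boxCl_union_boxCl, ← pureTensUnion_union, hlift, hlift, hlift, Finset.sup_union]
  · obtain ⟨s, rfl⟩ := exists_eq_boxCl_pureTensUnion hH
    rw [hlift, map_boxCl_pureTensUnion_eq_sup hjoin hzero hpure']
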